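/- arXiv:2511.06806 — 2 statements merged into one kernel-verified Lean document; each statement's English description precedes it below -/
import Mathlib

section
/- Let F be μ-strongly convex with L-Lipschitz gradient and minimizer x*. For the perturbed gradient step x⁺ = x - (1/L)(∇F(x) + e), one has F(x⁺) - F(x*) ≤ (1 - μ/L)(F(x) - F(x*)) + (1/(2L))‖e‖². -/
/-!
Lipschitz continuity of the gradient gives the descent bound
`F y ≤ F x + ⟪∇F x, y - x⟫ + (L/2)‖y - x‖²`, and for the step `y = x - (∇F x + e)/L` its right side
is `F x - (‖∇F x‖² - ‖e‖²)/(2L)`. Minimizing the strong convexity lower bound over `y` gives the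
Polyak–Łojasiewicz inequality `2μ (F x - F x*) ≤ ‖∇F x‖²`, which turns this guaranteed decrease
into the contraction factor `1 - μ/L`.
-/

open RealInnerProductSpace

section

variable {E : Type*} [NormedAddCommGroup E] [InnerProductSpace ℝ E]
  {F : E → ℝ} {g : E → E}

theorem two_mul_sub_le_norm_sq_gradient {μ : ℝ} (hμ : 0 ≤ μ)
    (hsc : ∀ x y, F x ≥ F y + ⟪x - y, g y⟫ + (μ / 2) * ‖x - y‖ ^ 2) (x y : E) :
    2 * μ * (F x - F y) ≤ ‖g x‖ ^ 2 := by
  have hlower := mul_le_mul_of_nonneg_left (hsc y x) (by positivity : 0 ≤ 2 * μ)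
  have hsq : 0 ≤ ‖μ • (y - x) + g x‖ ^ 2 := by positivity
  rw [norm_add_sq_real, norm_smul, inner_smul_left, Real.norm_of_nonneg hμ] at hsq
  simp only [conj_trivial] at hsq
  nlinarith

variable [CompleteSpace E]

theorem HasGradientAt.hasDerivAt_comp_add_smul {x d : E} {t : ℝ}
    (h : HasGradientAt F (g (x + t • d)) (x + t • d)) :
    HasDerivAt (fun s : ℝ => F (x + s • d)) ⟪g (x + t • d), d⟫ t := by
  have hline : HasDerivAt (fun s : ℝ => x + s • d) d t := by
    simpa using ((hasDerivAt_id t).smul_const d).const_add x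
  exact h.hasFDerivAt.comp_hasDerivAt t hline

theorem le_add_inner_add_of_lipschitz_gradient {L : ℝ} (hgrad : ∀ x, HasGradientAt F (g x) x)
    (hlip : ∀ x y, ‖g x - g y‖ ≤ L * ‖x - y‖) (x y : E) :
    F y ≤ F x + ⟪g x, y - x⟫ + (L / 2) * ‖y - x‖ ^ 2 := by
  set d := y - x
  set ψ : ℝ → ℝ := fun t => F (x + t • d) - t * ⟪g x, d⟫ - (L / 2) * t ^ 2 * ‖d‖ ^ 2
  have hψ : ∀ t, HasDerivAt ψ (⟪g (x + t • d) - g x, d⟫ - L * t * ‖d‖ ^ 2) t := by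
    intro t
    have hlin := (hasDerivAt_id t).mul_const ⟪g x, d⟫
    have hquad := ((hasDerivAt_pow 2 t).const_mul (L / 2)).mul_const (‖d‖ ^ 2)
    refine ((((hgrad (x + t • d)).hasDerivAt_comp_add_smul).sub hlin).sub hquad).congr_deriv ?_
    rw [inner_sub_left]
    push_cast
    ring
  have hslope : ∀ t ∈ interior (Set.Ici (0 : ℝ)), ⟪g (x + t • d) - g x, d⟫ - L * t * ‖d‖ ^ 2 ≤ 0 := by
    intro t ht
    rw [interior_Ici, Set.mem_Ioi] at ht
    rw [sub_nonpos]
    have hg : ‖g (x + t • d) - g x‖ ≤ L * (t * ‖d‖) := by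
      simpa [norm_smul, abs_of_pos ht] using hlip (x + t • d) x
    calc ⟪g (x + t • d) - g x, d⟫ ≤ ‖g (x + t • d) - g x‖ * ‖d‖ := real_inner_le_norm _ _
      _ ≤ L * (t * ‖d‖) * ‖d‖ := by gcongr
      _ = L * t * ‖d‖ ^ 2 := by ring
  have hanti : AntitoneOn ψ (Set.Ici 0) :=
    antitoneOn_of_hasDerivWithinAt_nonpos (convex_Ici 0)
      (fun t _ => (hψ t).continuousAt.continuousWithinAt)
      (fun t _ => (hψ t).hasDerivWithinAt) hslope
  have h01 := hanti Set.self_mem_Ici (Set.mem_Ici.mpr zero_le_one) zero_le_one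
  simp only [ψ, zero_smul, add_zero, one_smul, d, add_sub_cancel] at h01
  linarith

theorem perturbed_gradient_step_le {L : ℝ} (hL : L ≠ 0) (hgrad : ∀ x, HasGradientAt F (g x) x)
    (hlip : ∀ x y, ‖g x - g y‖ ≤ L * ‖x - y‖) (x e : E) :
    F (x - (1 / L) • (g x + e)) ≤ F x - (1 / (2 * L)) * ‖g x‖ ^ 2 + (1 / (2 * L)) * ‖e‖ ^ 2 := by
  have h := le_add_inner_add_of_lipschitz_gradient hgrad hlip x (x - (1 / L) • (g x + e))
  rw [sub_sub_cancel_left, inner_neg_right, norm_neg, inner_smul_right, norm_smul, mul_pow,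
    Real.norm_eq_abs, sq_abs, norm_add_sq_real, inner_add_right, real_inner_self_eq_norm_sq] at h
  convert h using 1
  field_simp
  ring

end

theorem perturbed_step_contraction_general {n : ℕ} (F : EuclideanSpace ℝ (Fin n) → ℝ)
    (g : EuclideanSpace ℝ (Fin n) → EuclideanSpace ℝ (Fin n)) (μ L : ℝ)
    (hμ : 0 < μ) (hμL : μ ≤ L)
    (hgrad : ∀ x, HasGradientAt F (g x) x)
    (hsc : ∀ x y, F x ≥ F y + ⟪x - y, g y⟫ + (μ / 2) * ‖x - y‖ ^ 2)
    (hlip : ∀ x y, ‖g x - g y‖ ≤ L * ‖x - y‖)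
    (xs : EuclideanSpace ℝ (Fin n))
    (x e : EuclideanSpace ℝ (Fin n)) :
    F (x - (1 / L) • (g x + e)) - F xs ≤
      (1 - μ / L) * (F x - F xs) + (1 / (2 * L)) * ‖e‖ ^ 2 := by
  have hL : 0 < L := hμ.trans_le hμL
  have hstep := perturbed_gradient_step_le hL.ne' hgrad hlip x e
  have hgap : μ / L * (F x - F xs) ≤ 1 / (2 * L) * ‖g x‖ ^ 2 :=
    calc μ / L * (F x - F xs) = 1 / (2 * L) * (2 * μ * (F x - F xs)) := by field_simp
      _ ≤ 1 / (2 * L) * ‖g x‖ ^ 2 := by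
        gcongr
        exact two_mul_sub_le_norm_sq_gradient hμ.le hsc x xs
  linarith

/-- Contraction of the optimality gap under a perturbed gradient step:
`F x⁺ - F x* ≤ (1 - μ/L)(F x - F x*) + (1/(2L))‖e‖²`. -/
theorem perturbed_step_contraction {n : ℕ} (F : EuclideanSpace ℝ (Fin n) → ℝ)
    (g : EuclideanSpace ℝ (Fin n) → EuclideanSpace ℝ (Fin n)) (μ L : ℝ)
    (hμ : 0 < μ) (hμL : μ ≤ L)
    (hgrad : ∀ x, HasGradientAt F (g x) x)
    (hsc : ∀ x y, F x ≥ F y + ⟪x - y, g y⟫ + (μ / 2) * ‖x - y‖ ^ 2)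
    (hlip : ∀ x y, ‖g x - g y‖ ≤ L * ‖x - y‖)
    (xs : EuclideanSpace ℝ (Fin n)) (hmin : ∀ z, F xs ≤ F z)
    (x e : EuclideanSpace ℝ (Fin n)) :
    F (x - (1 / L) • (g x + e)) - F xs ≤
      (1 - μ / L) * (F x - F xs) + (1 / (2 * L)) * ‖e‖ ^ 2 :=
  perturbed_step_contraction_general F g μ L hμ hμL hgrad hsc hlip xs x e
end

section
/- Suppose the per-sample gradients satisfy ‖∇f(x, ξ_m)‖² ≤ β₁ + β₂‖∇F(x)‖² for all m, where F is the average of f(·, ξ_m) over M_total samples. Let B ⊆ {1,…,M_total} be nonempty with cardinality |B|, and define the residual e = ((M_total - |B|)/(M_total·|B|))·Σ_{i∈B} ∇f(x,ξ_i) - (1/M_total)·Σ_{i∉B} ∇f(x,ξ_i). Then ‖e‖² ≤ 4((M_total - |B|)/M_total)²(β₁ + β₂‖∇F(x)‖²). -/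
/-!
Write `M = |ι|`, `k = |B|`. The residual is `(M - k)/M` times the mean of the `k` batch vectors,
minus `1/M` times the sum of the `M - k` remaining ones; each part has norm at most
`(M - k)/M · √C`, so the triangle inequality gives `‖e‖ ≤ 2 (M - k)/M · √C`, and squaring finishes.
-/

open Finset

lemma norm_sum_le_card_mul {ι E : Type*} [SeminormedAddCommGroup E] {v : ι → E} {G : ℝ}
    (s : Finset ι) (hv : ∀ i, ‖v i‖ ≤ G) : ‖∑ i ∈ s, v i‖ ≤ #s * G := by
  simpa using norm_sum_le_of_le s fun i _ ↦ hv i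

lemma cast_card_compl {ι : Type*} [Fintype ι] [DecidableEq ι] (B : Finset ι) :
    (#Bᶜ : ℝ) = Fintype.card ι - #B := by
  rw [card_compl, Nat.cast_sub (card_le_univ B)]

section BatchResidual

variable {ι E : Type*} [Fintype ι] [DecidableEq ι] [SeminormedAddCommGroup E] [NormedSpace ℝ E]
  {v : ι → E} {B : Finset ι}

theorem norm_batch_residual_le {G : ℝ} (hv : ∀ i, ‖v i‖ ≤ G) (hB : B.Nonempty) :
    ‖((Fintype.card ι - #B) / (Fintype.card ι * #B) : ℝ) • ∑ i ∈ B, v i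
        - (Fintype.card ι : ℝ)⁻¹ • ∑ i ∈ Bᶜ, v i‖ ≤
      2 * ((Fintype.card ι - #B) / Fintype.card ι) * G := by
  have hk : (0 : ℝ) < #B := by exact_mod_cast hB.card_pos
  have hkM : (#B : ℝ) ≤ Fintype.card ι := by exact_mod_cast card_le_univ B
  set M : ℝ := (Fintype.card ι : ℝ)
  have hbatch : ‖((M - #B) / (M * #B)) • ∑ i ∈ B, v i‖ ≤ (M - #B) / M * G := by
    calc ‖((M - #B) / (M * #B)) • ∑ i ∈ B, v i‖
        ≤ (M - #B) / (M * #B) * (#B * G) := by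
          rw [norm_smul, Real.norm_of_nonneg (by positivity)]
          gcongr
          exact norm_sum_le_card_mul B hv
      _ = (M - #B) / M * G := by field_simp
  have hrest : ‖M⁻¹ • ∑ i ∈ Bᶜ, v i‖ ≤ (M - #B) / M * G := by
    calc ‖M⁻¹ • ∑ i ∈ Bᶜ, v i‖ ≤ M⁻¹ * ((M - #B) * G) := by
          rw [norm_smul, Real.norm_of_nonneg (by positivity), ← cast_card_compl]
          gcongr
          exact norm_sum_le_card_mul Bᶜ hv
      _ = (M - #B) / M * G := by ring
  calc _ ≤ _ := norm_sub_le _ _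
    _ ≤ _ := add_le_add hbatch hrest
    _ = _ := by ring

theorem norm_batch_residual_sq_le {C : ℝ} (hv : ∀ i, ‖v i‖ ^ 2 ≤ C) (hB : B.Nonempty) :
    ‖((Fintype.card ι - #B) / (Fintype.card ι * #B) : ℝ) • ∑ i ∈ B, v i
        - (Fintype.card ι : ℝ)⁻¹ • ∑ i ∈ Bᶜ, v i‖ ^ 2 ≤
      4 * ((Fintype.card ι - #B) / Fintype.card ι) ^ 2 * C := by
  have hC : 0 ≤ C := (sq_nonneg _).trans (hv hB.choose)
  have hnorm : ∀ i, ‖v i‖ ≤ √C := fun i ↦ Real.le_sqrt_of_sq_le (hv i)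
  calc _ ≤ (2 * ((Fintype.card ι - #B) / Fintype.card ι) * √C) ^ 2 :=
        pow_le_pow_left₀ (norm_nonneg _) (norm_batch_residual_le hnorm hB) 2
    _ = _ := by rw [mul_pow, mul_pow, Real.sq_sqrt hC]; norm_num

end BatchResidual

theorem residual_bound_general {n M : ℕ}
    (gf : Fin M → EuclideanSpace ℝ (Fin n) → EuclideanSpace ℝ (Fin n))
    (gF : EuclideanSpace ℝ (Fin n) → EuclideanSpace ℝ (Fin n))
    (β₁ β₂ : ℝ)
    (hbound : ∀ m x, ‖gf m x‖ ^ 2 ≤ β₁ + β₂ * ‖gF x‖ ^ 2)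
    (B : Finset (Fin M)) (hB : B.Nonempty)
    (x : EuclideanSpace ℝ (Fin n)) :
    ‖(((M : ℝ) - B.card) / ((M : ℝ) * B.card)) • (∑ i ∈ B, gf i x)
        - ((M : ℝ))⁻¹ • (∑ i ∈ Bᶜ, gf i x)‖ ^ 2 ≤
      4 * (((M : ℝ) - B.card) / (M : ℝ)) ^ 2 * (β₁ + β₂ * ‖gF x‖ ^ 2) := by
  simpa using norm_batch_residual_sq_le (v := (gf · x)) (fun m ↦ hbound m x) hB

/-- Bound on the mini-batch gradient residual:
`‖e‖² ≤ 4((M - |B|)/M)² (β₁ + β₂‖∇F x‖²)`. -/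
theorem residual_bound {n M : ℕ} (hM : 0 < M)
    (f : Fin M → EuclideanSpace ℝ (Fin n) → ℝ)
    (F : EuclideanSpace ℝ (Fin n) → ℝ)
    (hF : ∀ x, F x = (1 / (M : ℝ)) * ∑ m, f m x)
    (gf : Fin M → EuclideanSpace ℝ (Fin n) → EuclideanSpace ℝ (Fin n))
    (gF : EuclideanSpace ℝ (Fin n) → EuclideanSpace ℝ (Fin n))
    (hgf : ∀ m x, HasGradientAt (f m) (gf m x) x)
    (hgF : ∀ x, HasGradientAt F (gF x) x)
    (β₁ β₂ : ℝ) (hβ₁ : 0 ≤ β₁) (hβ₂ : 0 ≤ β₂)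
    (hbound : ∀ m x, ‖gf m x‖ ^ 2 ≤ β₁ + β₂ * ‖gF x‖ ^ 2)
    (B : Finset (Fin M)) (hB : B.Nonempty)
    (x : EuclideanSpace ℝ (Fin n)) :
    ‖(((M : ℝ) - B.card) / ((M : ℝ) * B.card)) • (∑ i ∈ B, gf i x)
        - ((M : ℝ))⁻¹ • (∑ i ∈ Bᶜ, gf i x)‖ ^ 2 ≤
      4 * (((M : ℝ) - B.card) / (M : ℝ)) ^ 2 * (β₁ + β₂ * ‖gF x‖ ^ 2) :=
  residual_bound_general gf gF β₁ β₂ hbound B hB x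
end
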